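/- Let F = K_1 ∇ F• where every component of F• is either a non-trivial tree or an even cycle and at least one component of F• is a tree, and let F^o be an odd-ballooning of F in which every substituted odd cycle has length at least five. Then for every n ≥ e(F•), the graph E_{e(F•)} ∇ T_{n−e(F•), 2} contains no subgraph isomorphic to F^o. -/

import Mathlib

open SimpleGraph

/-- The join `G ∇ H` of two graphs: disjoint union together with all cross edges. -/
def graphJoin {α β : Type} (G : SimpleGraph α) (H : SimpleGraph β) :
    SimpleGraph (α ⊕ β) :=
  SimpleGraph.fromRel (fun x y =>
    (∃ a b, x = Sum.inl a ∧ y = Sum.inr b) ∨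
    (∃ a b, x = Sum.inl a ∧ y = Sum.inl b ∧ G.Adj a b) ∨
    (∃ a b, x = Sum.inr a ∧ y = Sum.inr b ∧ H.Adj a b))

/-- The disjoint union `G ∪ H` of two graphs. -/
def graphDisjUnion {α β : Type} (G : SimpleGraph α) (H : SimpleGraph β) :
    SimpleGraph (α ⊕ β) :=
  SimpleGraph.fromRel (fun x y =>
    (∃ a b, x = Sum.inl a ∧ y = Sum.inl b ∧ G.Adj a b) ∨
    (∃ a b, x = Sum.inr a ∧ y = Sum.inr b ∧ H.Adj a b))

/-- The matching `M_m` consisting of `m` pairwise disjoint edges. -/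
def matchingGraph (m : ℕ) : SimpleGraph (Fin (2 * m)) :=
  SimpleGraph.fromRel (fun x y => (x : ℕ) / 2 = (y : ℕ) / 2)

/-- The star `S_m` on `m` vertices, with centre `0`. -/
def starGraph (m : ℕ) : SimpleGraph (Fin m) :=
  SimpleGraph.fromRel (fun x _ => (x : ℕ) = 0)

/-- `G` contains a (not necessarily induced) copy of `H` as a subgraph. -/
def ContainsCopy {α β : Type} (H : SimpleGraph α) (G : SimpleGraph β) : Prop :=
  ∃ f : α ↪ β, ∀ ⦃a b : α⦄, H.Adj a b → G.Adj (f a) (f b)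

/-- `G` is `H`-free: it contains no subgraph isomorphic to `H`. -/
def IsFreeOf {α β : Type} (H : SimpleGraph α) (G : SimpleGraph β) : Prop :=
  ¬ ContainsCopy H G

/-- The number of edges of a graph. -/
noncomputable def eCount {α : Type} (G : SimpleGraph α) : ℕ :=
  Nat.card G.edgeSet

/-- `G ∈ EX(n, H)`: `G` is an `n`-vertex `H`-free graph with the maximum possible
number of edges among all `n`-vertex `H`-free graphs. -/
def IsExtremalFree {α : Type} (H : SimpleGraph α) (n : ℕ) (G : SimpleGraph (Fin n)) : Prop :=
  IsFreeOf H G ∧ ∀ G' : SimpleGraph (Fin n), IsFreeOf H G' → eCount G' ≤ eCount G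

/-- The Turán number `ex(n, H)`. -/
noncomputable def exNum {α : Type} (n : ℕ) (H : SimpleGraph α) : ℕ :=
  sSup {m | ∃ G : SimpleGraph (Fin n), IsFreeOf H G ∧ eCount G = m}

/-- `Fo` is an odd-ballooning of `F` in which every substituted odd cycle has length
at least five: every edge `uv` of `F` is replaced by an odd cycle through `u` and `v`
(consisting of the edge `f u f v` together with a path of even length at least four
joining `f v` to `f u`), all new vertices of different substituted cycles being distinct. -/
def IsOddBallooning {α β : Type} (F : SimpleGraph α) (Fo : SimpleGraph β) : Prop :=
  ∃ (f : α ↪ β) (P : ∀ u v : α, F.Adj u v → Fo.Walk (f v) (f u)),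
    (∀ u v : α, F.Adj u v → Fo.Adj (f u) (f v)) ∧
    (∀ u v : α, ∀ h : F.Adj u v, (P u v h).IsPath) ∧
    (∀ u v : α, ∀ h : F.Adj u v, 4 ≤ (P u v h).length ∧ Even (P u v h).length) ∧
    (∀ u v : α, ∀ h : F.Adj u v, P v u h.symm = (P u v h).reverse) ∧
    (∀ u v : α, ∀ h : F.Adj u v, ∀ b : β, b ∈ (P u v h).support →
      b = f u ∨ b = f v ∨ b ∉ Set.range f) ∧
    (∀ u v u' v' : α, ∀ h : F.Adj u v, ∀ h' : F.Adj u' v', s(u, v) ≠ s(u', v') →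
      ∀ b : β, b ∈ (P u v h).support → b ∈ (P u' v' h').support → b ∈ Set.range f) ∧
    (∀ b : β, b ∈ Set.range f ∨ ∃ u v : α, ∃ h : F.Adj u v, b ∈ (P u v h).support) ∧
    (∀ e ∈ Fo.edgeSet, (∃ u v : α, ∃ _ : F.Adj u v, e = s(f u, f v)) ∨
      ∃ u v : α, ∃ h : F.Adj u v, e ∈ (P u v h).edges)

/-- The connected component `C` of `F` is an even cycle (of length at least four). -/
def IsEvenCycleComp {α : Type} (F : SimpleGraph α) (C : F.ConnectedComponent) : Prop :=
  ∃ m : ℕ, 2 ≤ m ∧ Nonempty ((F.induce C.supp) ≃g cycleGraph (2 * m))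

/-- Every connected component of `F` is either a non-trivial tree or an even cycle. -/
def GoodComponents {α : Type} (F : SimpleGraph α) : Prop :=
  ∀ C : F.ConnectedComponent,
    ((F.induce C.supp).IsTree ∧ 2 ≤ Nat.card C.supp) ∨ IsEvenCycleComp F C
/-- `M` (together with `E_t`) joined to a Turán graph contains `H`:
the defining property of members of the decomposition family `𝓜(H)`
of a graph `H` with chromatic number `r + 1`. -/
def DecompProp {γ δ : Type} (H : SimpleGraph γ) (r : ℕ) (M : SimpleGraph δ) : Prop :=
  ∃ t : ℕ, ContainsCopy H
    (graphJoin (graphDisjUnion M (⊥ : SimpleGraph (Fin t)))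
      (SimpleGraph.turanGraph ((r - 1) * t) (r - 1)))

/-- `M` is a member of the decomposition family `𝓜(H)` (for `H` of chromatic number
`r + 1`): it is minimal with respect to the subgraph relation such that
`H ⊆ (M ∪ E_t) ∇ T_{(r-1)t, r-1}` for some `t`.  (Minimality with respect to the
subgraph relation amounts to edge-minimality together with the absence of isolated
vertices.) -/
def IsMinimalDecomp {γ δ : Type} (H : SimpleGraph γ) (r : ℕ) (M : SimpleGraph δ) : Prop :=
  DecompProp H r M ∧
  (∀ M' : SimpleGraph δ, M' ≤ M → M' ≠ M → ¬ DecompProp H r M') ∧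
  (∀ v : δ, ∃ w : δ, M.Adj v w)

/-- `G` is `𝓜(H)`-free, where `𝓜(H)` is the decomposition family of `H`. -/
def DecompFree {γ : Type} (H : SimpleGraph γ) (r : ℕ) {n : ℕ} (G : SimpleGraph (Fin n)) : Prop :=
  ∀ (m : ℕ) (M : SimpleGraph (Fin m)), IsMinimalDecomp H r M → IsFreeOf M G

/-- `G ∈ EX(n, 𝓜(H))`. -/
def IsExtremalDecompFree {γ : Type} (H : SimpleGraph γ) (r n : ℕ)
    (G : SimpleGraph (Fin n)) : Prop :=
  DecompFree H r G ∧ ∀ G' : SimpleGraph (Fin n), DecompFree H r G' → eCount G' ≤ eCount G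

/-- The vertex type of the graph obtained from `F` by cracking all vertices of `U`:
the old vertices outside `U`, a vertex `u_v` for every pair `(u, v)` with `u ∈ U`
and `v` a neighbour of `u`, and a new vertex `w_{u,v}` for every such pair of
Type II (i.e. with `¬ T (u, v)`). -/
abbrev CrackVert {α : Type} (F : SimpleGraph α) (U : Set α) (T : α × α → Prop) : Type :=
  {a : α // a ∉ U} ⊕
    ({p : α × α // p.1 ∈ U ∧ F.Adj p.1 p.2} ⊕
      {p : α × α // (p.1 ∈ U ∧ F.Adj p.1 p.2) ∧ ¬ T p})

/-- The graph obtained from `F` by cracking all vertices of the independent set `U`,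
where each cracked edge `u v` (`u ∈ U`) is of Type I if `T (u, v)` holds (then `u_v`
is joined to `v`) and of Type II otherwise (then `u_v` is joined to the new vertex
`w_{u,v}`). -/
def crackedGraph {α : Type} (F : SimpleGraph α) (U : Set α) (T : α × α → Prop) :
    SimpleGraph (CrackVert F U T) :=
  SimpleGraph.fromRel (fun x y =>
    match x, y with
    | Sum.inl a, Sum.inl b => F.Adj a.val b.val
    | Sum.inl a, Sum.inr (Sum.inl p) => T p.val ∧ p.val.2 = a.val
    | Sum.inr (Sum.inl p), Sum.inr (Sum.inr q) => p.val = q.val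
    | _, _ => False)

/-- `M` is a member of the cracking family `𝓒(F)`: it is obtained from `F` by
cracking all vertices of some independent set `U` of `F`. -/
def InCrackingFamily {α δ : Type} (F : SimpleGraph α) (M : SimpleGraph δ) : Prop :=
  ∃ (U : Set α) (T : α × α → Prop),
    (∀ u ∈ U, ∀ v ∈ U, ¬ F.Adj u v) ∧ Nonempty (M ≃g crackedGraph F U T)

/-- The matching number of `G` is at most `ν`. -/
def MatchingNumberLE {V : Type} (G : SimpleGraph V) (ν : ℕ) : Prop :=
  ∀ s : Finset (Sym2 V), (∀ e ∈ s, e ∈ G.edgeSet) →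
    (∀ e ∈ s, ∀ e' ∈ s, e ≠ e' → ∀ x : V, x ∈ e → x ∉ e') → s.card ≤ ν

/-- The maximum degree of `G` is at most `Δ`. -/
def MaxDegreeLE {V : Type} (G : SimpleGraph V) (Δ : ℕ) : Prop :=
  ∀ v : V, Nat.card (G.neighborSet v) ≤ Δ

/-- `f(ν, Δ)`: the maximum number of edges of a finite graph with matching number
at most `ν` and maximum degree at most `Δ`. -/
noncomputable def fNuDelta (ν Δ : ℕ) : ℕ :=
  sSup {m | ∃ (k : ℕ) (G : SimpleGraph (Fin k)),
    MatchingNumberLE G ν ∧ MaxDegreeLE G Δ ∧ eCount G = m}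

/-- The number of edges of `G` joining distinct parts of the partition `c`. -/
noncomputable def crossCount {n r : ℕ} (G : SimpleGraph (Fin n)) (c : Fin n → Fin r) : ℕ :=
  Nat.card {e : Sym2 (Fin n) // e ∈ G.edgeSet ∧ ∃ x ∈ e, ∃ y ∈ e, c x ≠ c y}

/-- The number of edges of `G` inside part `i` of the partition `c`. -/
noncomputable def insideCount {n r : ℕ} (G : SimpleGraph (Fin n)) (c : Fin n → Fin r)
    (i : Fin r) : ℕ :=
  Nat.card {e : Sym2 (Fin n) // e ∈ G.edgeSet ∧ ∀ x ∈ e, c x = i}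

/-- `d_{V_i}(w)`: the number of neighbours of `w` in part `i` of the partition `c`. -/
noncomputable def degIn {n r : ℕ} (G : SimpleGraph (Fin n)) (c : Fin n → Fin r)
    (i : Fin r) (w : Fin n) : ℕ :=
  Nat.card {y : Fin n // c y = i ∧ G.Adj w y}

/-- The degree of `v` in `G`. -/
noncomputable def degAll {n : ℕ} (G : SimpleGraph (Fin n)) (v : Fin n) : ℕ :=
  Nat.card (G.neighborSet v)

/-!
Let `m = e(F•)`. Every substituted cycle is odd and `T_{N,2}` is bipartite, so in a copy of
`F^o` in `E_m ∇ T_{N,2}` each substituted cycle meets `E_m`. The branch vertices landing in `E_m`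
form an independent set `S` of `F = K₁ ∇ F•`. The cycle of an edge of `F - S` meets `E_m` in a
vertex that is not a branch vertex, hence private to that cycle, so `e(F - S) + |S| ≤ m`.
If the apex lies in `S`, then `S` is the apex alone and `e(F - S) = m`. Otherwise
`e(F - S) + |S| ≥ |V(F•)|`, which exceeds `m`: a tree component of `F•` has fewer edges than
vertices, and a cycle component has as many edges as vertices.
-/

open Finset

section GraphJoin

variable {α β : Type} {G : SimpleGraph α} {H : SimpleGraph β}

@[simp]
lemma graphJoin_adj_inl_inl {a b : α} : (graphJoin G H).Adj (.inl a) (.inl b) ↔ G.Adj a b := by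
  grind [graphJoin, fromRel_adj, Adj.ne, G.adj_comm]

@[simp]
lemma graphJoin_adj_inl_inr (a : α) (b : β) : (graphJoin G H).Adj (.inl a) (.inr b) := by
  simp [graphJoin]

@[simp]
lemma graphJoin_adj_inr_inl (a : β) (b : α) : (graphJoin G H).Adj (.inr a) (.inl b) :=
  (graphJoin_adj_inl_inr b a).symm

@[simp]
lemma graphJoin_adj_inr_inr {a b : β} : (graphJoin G H).Adj (.inr a) (.inr b) ↔ H.Adj a b := by
  grind [graphJoin, fromRel_adj, Adj.ne, H.adj_comm]

end GraphJoin

theorem SimpleGraph.Walk.even_length_iff_of_forall_dart_ne {V : Type} {G : SimpleGraph V}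
    (c : V → Bool) {u v : V} (p : G.Walk u v) (hc : ∀ d ∈ p.darts, c d.fst ≠ c d.snd) :
    Even p.length ↔ c u = c v := by
  induction p with
  | nil => simp
  | cons h p ih =>
    simp only [Walk.darts_cons, List.mem_cons, forall_eq_or_imp] at hc
    rw [Walk.length_cons, Nat.even_add_one, ih hc.2]
    revert hc
    cases c _ <;> cases c _ <;> cases c _ <;> simp

def turanGraph.boolColoring (n : ℕ) : (turanGraph n 2).Coloring Bool :=
  Coloring.mk (fun v => decide ((v : ℕ) % 2 = 0)) fun {v w} h => by
    rw [turanGraph_adj] at h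
    simp only [ne_eq, decide_eq_decide]
    omega

lemma graphJoin.exists_inl_mem_support_of_odd_length {α β : Type} {G : SimpleGraph α}
    {H : SimpleGraph β} (cH : H.Coloring Bool) {x : α ⊕ β} (p : (graphJoin G H).Walk x x)
    (hp : Odd p.length) : ∃ a, Sum.inl a ∈ p.support := by
  by_contra! hinr
  have hc : ∀ d ∈ p.darts,
      Sum.elim (fun _ => false) cH d.fst ≠ Sum.elim (fun _ => false) cH d.snd := by
    intro d hd
    obtain ⟨⟨x, y⟩, hxy⟩ := d
    have hx := p.dart_fst_mem_support_of_mem_darts hd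
    have hy := p.dart_snd_mem_support_of_mem_darts hd
    cases x with
    | inl a => exact absurd hx (hinr a)
    | inr a =>
      cases y with
      | inl b => exact absurd hy (hinr b)
      | inr b => exact cH.valid (graphJoin_adj_inr_inr.mp hxy)
  exact Nat.not_even_iff_odd.mpr hp ((p.even_length_iff_of_forall_dart_ne _ hc).mpr rfl)

def edgesAvoiding {V : Type} [DecidableEq V] (F : SimpleGraph V) [Fintype F.edgeSet]
    (S : Finset V) : Finset (Sym2 V) :=
  {e ∈ F.edgeFinset | ∀ x ∈ S, x ∉ e}

lemma mem_edgesAvoiding {V : Type} [DecidableEq V] {F : SimpleGraph V} [Fintype F.edgeSet]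
    {S : Finset V} {e : Sym2 V} : e ∈ edgesAvoiding F S ↔ e ∈ F.edgeSet ∧ ∀ x ∈ S, x ∉ e := by
  simp [edgesAvoiding]

theorem IsOddBallooning.exists_isIndepSet_card_edgesAvoiding_add_card_le {α β γ : Type}
    [Fintype α] [DecidableEq α] {F : SimpleGraph α} [DecidableRel F.Adj] {Fo : SimpleGraph β}
    (hFo : IsOddBallooning F Fo) {G : SimpleGraph γ} (hcopy : ContainsCopy Fo G)
    (X : Finset γ) (hXind : G.IsIndepSet X)
    (hX : ∀ x (p : G.Walk x x), Odd p.length → ∃ y ∈ p.support, y ∈ X) :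
    ∃ S : Finset α, F.IsIndepSet S ∧ #(edgesAvoiding F S) + #S ≤ #X := by
  classical
  obtain ⟨g, hg⟩ := hcopy
  obtain ⟨f, P, hadj, -, hlen, -, hsupp, hdisj, -, -⟩ := hFo
  set S : Finset α := {x | g (f x) ∈ X} with hS
  have hmemS : ∀ x, x ∈ S ↔ g (f x) ∈ X := by simp [hS]
  refine ⟨S, fun x hx y hy hxy hFxy => ?_, ?_⟩
  · exact hXind ((hmemS x).mp hx) ((hmemS y).mp hy) (by simpa using hxy) (hg (hadj x y hFxy))
  have hit : ∀ e ∈ F.edgeSet, ∃ b, g b ∈ X ∧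
      ∃ u v, ∃ h : F.Adj u v, e = s(u, v) ∧ b ∈ (P u v h).support := by
    intro e he
    induction e using Sym2.ind with
    | _ u v =>
      let φ : Fo →g G := ⟨g, fun h => hg h⟩
      obtain ⟨y, hy, hyX⟩ := hX _ ((Walk.cons (hadj u v he) (P u v he)).map φ)
        (by simpa using (hlen u v he).2.add_one)
      obtain ⟨b, hb, rfl⟩ := List.mem_map.mp (Walk.support_map φ _ ▸ hy)
      refine ⟨b, hyX, u, v, he, rfl, ?_⟩
      rcases List.mem_cons.mp (Walk.support_cons _ _ ▸ hb) with rfl | hb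
      exacts [Walk.end_mem_support _, hb]
  choose b hbX hb using hit
  have hmemE : ∀ e ∈ edgesAvoiding F S, e ∈ F.edgeSet :=
    fun e he => (mem_edgesAvoiding.mp he).1
  have hb_not_branch : ∀ e (he : e ∈ edgesAvoiding F S), b e (hmemE e he) ∉ Set.range f := by
    rintro e he ⟨x, hx⟩
    obtain ⟨u, v, h, rfl, hmem⟩ := hb e (hmemE e he)
    have hxS : x ∈ S := (hmemS x).mpr (hx ▸ hbX _ _)
    have hxe : x ∈ s(u, v) := by
      rcases hsupp u v h _ hmem with h1 | h1 | h1
      · simp [f.injective (hx.trans h1)]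
      · simp [f.injective (hx.trans h1)]
      · exact absurd ⟨x, hx⟩ h1
    exact (mem_edgesAvoiding.mp he).2 x hxS hxe
  let ψ : {e // e ∈ edgesAvoiding F S} ⊕ {x // x ∈ S} → {y // y ∈ X} :=
    Sum.elim (fun e => ⟨g (b e.1 (hmemE e.1 e.2)), hbX _ _⟩)
      (fun x => ⟨g (f x), (hmemS x).mp x.2⟩)
  have hψ : Function.Injective ψ := by
    rintro (⟨e, he⟩ | ⟨x, hx⟩) (⟨e', he'⟩ | ⟨x', hx'⟩) h <;>
      simp only [ψ, Sum.elim_inl, Sum.elim_inr, Subtype.mk.injEq, g.injective.eq_iff] at h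
    · by_contra hne
      obtain ⟨u, v, huv, rfl, hm⟩ := hb e (hmemE e he)
      obtain ⟨u', v', huv', rfl, hm'⟩ := hb e' (hmemE e' he')
      exact hb_not_branch _ he
        (hdisj u v u' v' huv huv' (fun h' => hne (by simp [h'])) _ hm (h ▸ hm'))
    · exact absurd ⟨x', h.symm⟩ (hb_not_branch e he)
    · exact absurd ⟨x, h⟩ (hb_not_branch e' he')
    · simp [f.injective h]
  simpa using Fintype.card_le_of_injective ψ hψ

lemma eCount_eq_card_edgeFinset {V : Type} (G : SimpleGraph V) [Fintype G.edgeSet] :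
    eCount G = #G.edgeFinset := by
  rw [eCount, Nat.card_eq_fintype_card, edgeFinset_card]

theorem eCount_lt_card_edgesAvoiding_add_card_of_isIndepSet {α : Type} [Fintype α]
    [DecidableEq α] {Fd : SimpleGraph α} [DecidableRel (graphJoin (⊤ : SimpleGraph (Fin 1)) Fd).Adj]
    (hFd : eCount Fd < Fintype.card α) {S : Finset (Fin 1 ⊕ α)}
    (hS : (graphJoin (⊤ : SimpleGraph (Fin 1)) Fd).IsIndepSet S) :
    eCount Fd < #(edgesAvoiding (graphJoin (⊤ : SimpleGraph (Fin 1)) Fd) S) + #S := by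
  classical
  rw [eCount_eq_card_edgeFinset] at hFd ⊢
  by_cases h0 : Sum.inl 0 ∈ S
  · have hinr : ∀ v, Sum.inr v ∉ S := fun v hv => hS h0 hv (by simp) (by simp)
    have hle : #Fd.edgeFinset ≤ #(edgesAvoiding (graphJoin ⊤ Fd) S) := by
      refine card_le_card_of_injOn (Sym2.map Sum.inr) (fun e he => ?_)
        (Sym2.map.injective Sum.inr_injective).injOn
      induction e using Sym2.ind with
      | _ u v =>
        simp only [coe_edgeFinset, mem_coe, mem_edgesAvoiding, Sym2.map_mk, mem_edgeSet,
          graphJoin_adj_inr_inr, Sym2.mem_iff] at he ⊢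
        refine ⟨he, fun x hx hxe => ?_⟩
        rcases hxe with rfl | rfl <;> exact hinr _ hx
    have : 0 < #S := card_pos.mpr ⟨_, h0⟩
    omega
  · have hle₁ : #{v | Sum.inr v ∉ S} ≤ #(edgesAvoiding (graphJoin ⊤ Fd) S) := by
      refine card_le_card_of_injOn (fun v => s(Sum.inl 0, Sum.inr v)) (fun v hv => ?_)
        (fun v _ w _ h => by simpa using h)
      simp only [coe_filter, mem_univ, true_and, Set.mem_ofPred_eq, mem_coe, mem_edgesAvoiding,
        mem_edgeSet, graphJoin_adj_inl_inr, Sym2.mem_iff] at hv ⊢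
      refine fun x hx hxe => ?_
      rcases hxe with rfl | rfl
      exacts [h0 hx, hv hx]
    have hle₂ : #{v | Sum.inr v ∈ S} ≤ #S :=
      card_le_card_of_injOn Sum.inr (fun v hv => by simpa using hv) Sum.inr_injective.injOn
    have := card_filter_add_card_filter_not (s := univ) (fun v => Sum.inr v ∈ S)
    rw [card_univ] at this
    omega

lemma SimpleGraph.IsTree.sum_degrees_lt {V : Type} [Fintype V] {G : SimpleGraph V}
    [DecidableRel G.Adj] (hG : G.IsTree) : ∑ v, G.degree v < 2 * Fintype.card V := by
  have := hG.card_edgeFinset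
  rw [sum_degrees_eq_twice_card_edges]
  omega

lemma SimpleGraph.Iso.sum_degrees_eq_of_cycleGraph {V : Type} [Fintype V] {G : SimpleGraph V}
    [DecidableRel G.Adj] {n : ℕ} (hn : 3 ≤ n) (e : G ≃g cycleGraph n) :
    ∑ v, G.degree v = 2 * Fintype.card V := by
  obtain ⟨k, rfl⟩ : ∃ k, n = k + 3 := ⟨n - 3, by omega⟩
  calc ∑ v, G.degree v = ∑ _v : V, 2 :=
        sum_congr rfl fun v _ => by rw [← e.degree_eq v, cycleGraph_degree_three_le]
    _ = 2 * Fintype.card V := by simp [mul_comm]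

theorem GoodComponents.eCount_lt {α : Type} [Fintype α] {F : SimpleGraph α}
    (hcomp : GoodComponents F) (htree : ∃ C : F.ConnectedComponent, (F.induce C.supp).IsTree) :
    eCount F < Fintype.card α := by
  classical
  have hdeg : ∀ C : F.ConnectedComponent,
      ∑ v : C.supp, F.degree v = ∑ v : C.supp, (F.induce C.supp).degree v := by
    refine fun C => sum_congr rfl fun v _ => (degree_induce_of_neighborSet_subset ?_).symm
    intro w hw
    exact ((ConnectedComponent.connectedComponentMk_eq_of_adj hw).symm.trans v.2 :)
  have hle : ∀ C : F.ConnectedComponent,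
      ∑ v : C.supp, (F.induce C.supp).degree v ≤ 2 * Fintype.card C.supp := by
    intro C
    rcases hcomp C with ⟨htree, -⟩ | ⟨m, hm, ⟨e⟩⟩
    · exact htree.sum_degrees_lt.le
    · exact (e.sum_degrees_eq_of_cycleGraph (by omega)).le
  obtain ⟨C₀, hC₀⟩ := htree
  have : 2 * eCount F < 2 * Fintype.card α := calc
    2 * eCount F = ∑ C : F.ConnectedComponent, ∑ v : C.supp, F.degree v := by
      rw [eCount_eq_card_edgeFinset, ← sum_degrees_eq_twice_card_edges]
      convert (Fintype.sum_fiberwise F.connectedComponentMk _).symm <;>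
        simp [ConnectedComponent.mem_supp_iff]
    _ < ∑ C : F.ConnectedComponent, 2 * Fintype.card C.supp := by
      simp only [hdeg]
      exact sum_lt_sum (fun C _ => hle C) ⟨C₀, mem_univ _, hC₀.sum_degrees_lt⟩
    _ = 2 * Fintype.card α := by
      rw [← mul_sum]
      congr 1
      convert (Fintype.sum_fiberwise F.connectedComponentMk (fun _ => 1)) <;>
        simp [Fintype.card_subtype]
  omega

theorem stmt_18_general {α β : Type} [Fintype α]
    (Fdot : SimpleGraph α) (hcomp : GoodComponents Fdot)
    (htree : ∃ C : Fdot.ConnectedComponent, (Fdot.induce C.supp).IsTree)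
    (Fo : SimpleGraph β)
    (hFo : IsOddBallooning (graphJoin (⊤ : SimpleGraph (Fin 1)) Fdot) Fo) :
    ∀ n : ℕ, eCount Fdot ≤ n →
      IsFreeOf Fo (graphJoin (⊥ : SimpleGraph (Fin (eCount Fdot)))
        (SimpleGraph.turanGraph (n - eCount Fdot) 2)) := by
  classical
  intro n _ hcopy
  obtain ⟨S, hS, hle⟩ := hFo.exists_isIndepSet_card_edgesAvoiding_add_card_le hcopy
    (univ.map .inl) (by simp [Set.Pairwise]) fun x p hp => by
      obtain ⟨a, ha⟩ :=
        graphJoin.exists_inl_mem_support_of_odd_length (turanGraph.boolColoring _) p hp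
      exact ⟨_, ha, by simp⟩
  have hlt := eCount_lt_card_edgesAvoiding_add_card_of_isIndepSet (hcomp.eCount_lt htree) hS
  simp only [card_map, card_univ, Fintype.card_fin] at hle
  omega

/-- Let `F = K₁ ∇ F•` where every component of `F•` is a non-trivial
tree or an even cycle and at least one component of `F•` is a tree, and let `F^o` be an
odd-ballooning of `F` with every substituted odd cycle of length at least five.  Then
for every `n ≥ e(F•)`, the graph `E_{e(F•)} ∇ T_{n-e(F•), 2}` contains no subgraph
isomorphic to `F^o`. -/
theorem stmt_18 {α β : Type} [Fintype α] [Fintype β] [Nonempty α]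
    (Fdot : SimpleGraph α) (hcomp : GoodComponents Fdot)
    (htree : ∃ C : Fdot.ConnectedComponent, (Fdot.induce C.supp).IsTree)
    (Fo : SimpleGraph β)
    (hFo : IsOddBallooning (graphJoin (⊤ : SimpleGraph (Fin 1)) Fdot) Fo) :
    ∀ n : ℕ, eCount Fdot ≤ n →
      IsFreeOf Fo (graphJoin (⊥ : SimpleGraph (Fin (eCount Fdot)))
        (SimpleGraph.turanGraph (n - eCount Fdot) 2)) :=
  stmt_18_general Fdot hcomp htree Fo hFo
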